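/- G × K₂ is connected if and only if G is a connected non-bipartite graph. -/

import Mathlib

open SimpleGraph

universe u v

/-- Kronecker (direct / tensor) product of two simple graphs. -/
def SimpleGraph.tensor {V : Type u} {W : Type v} (G : SimpleGraph V) (H : SimpleGraph W) :
    SimpleGraph (V × W) where
  Adj p q := G.Adj p.1 q.1 ∧ H.Adj p.2 q.2
  symm := ⟨fun _ _ h => ⟨h.1.symm, h.2.symm⟩⟩
  loopless := ⟨fun _ h => G.loopless.irrefl _ h.1⟩

/-- `G × K₂`, realized on `V × Bool` (where `false` plays the role of `a` and `true` of `b`):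
`(u,x)` is adjacent to `(v,y)` iff `uv ∈ E(G)` and `x ≠ y`. -/
def timesK2 {V : Type u} (G : SimpleGraph V) : SimpleGraph (V × Bool) :=
  G.tensor ⊤

/-- `C` is (the vertex set of) a connected component of the graph `H`. -/
def IsComp {α : Type u} (H : SimpleGraph α) (C : Set α) : Prop :=
  ∃ K : H.ConnectedComponent, C = K.supp

/-- `C ⊆ V` is (the vertex set of) a connected component of the induced subgraph `G[s]`. -/
def IsCompOf {V : Type u} (G : SimpleGraph V) (s C : Set V) : Prop :=
  ∃ K : (G.induce s).ConnectedComponent, C = Subtype.val '' K.supp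

/-- `(X, Y)` is a b-pair of `G`: `X` and `Y` are disjoint, `V(G) - (X ∪ Y)` is nonempty,
`G - (X ∪ Y)` has a bipartite component `C`, and `G[V(C) ∪ {x}]` is bipartite
for each `x ∈ X`.  (Bipartite = 2-colorable.) -/
def IsBPair {V : Type u} (G : SimpleGraph V) (X Y : Set V) : Prop :=
  Disjoint X Y ∧ ((X ∪ Y)ᶜ : Set V).Nonempty ∧
    ∃ C : Set V, IsCompOf G ((X ∪ Y)ᶜ) C ∧ (G.induce C).Colorable 2 ∧
      ∀ x ∈ X, (G.induce (C ∪ {x})).Colorable 2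

/-- `b(G) = min{|X| + 2|Y| : (X,Y) is a b-pair of G}`. -/
noncomputable def bInv {V : Type u} (G : SimpleGraph V) : ℕ :=
  sInf {n | ∃ X Y : Set V, IsBPair G X Y ∧ n = X.ncard + 2 * Y.ncard}

/-- `S` is a separating set of `G`: removing `S` leaves a disconnected graph,
or a graph with at most one vertex. -/
def IsSeparating {V : Type u} (G : SimpleGraph V) (S : Set V) : Prop :=
  ¬ (G.induce Sᶜ).Connected ∨ (Sᶜ : Set V).Subsingleton

/-- The vertex connectivity `κ(G)`: the fewest number of vertices whose removal
disconnects `G` or leaves at most a single vertex. -/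
noncomputable def kappa {V : Type u} (G : SimpleGraph V) : ℕ :=
  sInf {n | ∃ S : Set V, IsSeparating G S ∧ n = S.ncard}

/-- The quotient-like graph `G*` whose vertices are the nonempty classes
`S'_u = ({u} × {a,b}) − S` (indexed by `u ∈ V(G)`), with `S'_u ~ S'_v` iff
`G × K₂ − S` has an edge with one end in `S'_u` and the other in `S'_v`. -/
def starGraph {V : Type u} (G : SimpleGraph V) (S : Set (V × Bool)) : SimpleGraph V where
  Adj u v := u ≠ v ∧ ∃ x y : Bool, (u, x) ∉ S ∧ (v, y) ∉ S ∧ (timesK2 G).Adj (u, x) (v, y)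
  symm := by
    refine ⟨?_⟩
    rintro u v ⟨h, x, y, hx, hy, hadj⟩
    exact ⟨h.symm, y, x, hy, hx, hadj.symm⟩
  loopless := ⟨fun u h => h.1 rfl⟩

/-!
A walk in `G × K₂` projects to a walk in `G` of the same length, and its length is even exactly
when its ends lie on the same side; conversely every walk of `G` lifts, starting on either side.
So `(u, x)` and `(v, y)` are joined iff `G` has a `u`–`v` walk whose parity matches `x = y`.
In a connected graph both parities are available between any two vertices precisely when there
is an odd closed walk, i.e. when the graph is not bipartite.
-/

theorem SimpleGraph.Connected.exists_walk_even_length_iff {V : Type*} {G : SimpleGraph V}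
    (hG : G.Connected) (hG₂ : ¬G.Colorable 2) (a b : V) (P : Prop) :
    ∃ w : G.Walk a b, (Even w.length ↔ P) := by
  obtain ⟨u, c, hc⟩ : ∃ u, ∃ c : G.Walk u u, ¬Even c.length := by
    simpa [two_colorable_iff_forall_loop_even] using hG₂
  obtain ⟨p⟩ := hG a u
  obtain ⟨q⟩ := hG u b
  by_cases hpq : Even (p.append q).length ↔ P
  · exact ⟨p.append q, hpq⟩
  · refine ⟨p.append (c.append q), ?_⟩
    simp only [Walk.length_append, Nat.even_add] at hpq ⊢
    tauto

section TimesK2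

variable {V : Type u} (G : SimpleGraph V)

def timesK2Fst : timesK2 G →g G :=
  ⟨Prod.fst, And.left⟩

def timesK2SideColoring : (timesK2 G).Coloring Bool :=
  Coloring.mk Prod.snd And.right

theorem timesK2_reachable_of_walk {u v : V} (w : G.Walk u v) {x y : Bool}
    (hxy : Even w.length ↔ x = y) : (timesK2 G).Reachable (u, x) (v, y) := by
  induction w generalizing x with
  | nil => simp_all
  | cons h p ih =>
    have hstep : (timesK2 G).Adj (_, x) (_, !x) := ⟨h, by simp⟩
    refine hstep.reachable.trans (ih ?_)
    rw [Walk.length_cons, Nat.even_add_one] at hxy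
    cases x <;> cases y <;> simp_all

theorem timesK2_even_length_iff {p q : V × Bool} (w : (timesK2 G).Walk p q) :
    Even w.length ↔ p.2 = q.2 := by
  have h : Even w.length ↔ (p.2 ↔ q.2) := (timesK2SideColoring G).even_length_iff_congr w
  simpa [Bool.coe_iff_coe] using h

theorem timesK2_reachable_iff {u v : V} {x y : Bool} :
    (timesK2 G).Reachable (u, x) (v, y) ↔ ∃ w : G.Walk u v, (Even w.length ↔ x = y) :=
  ⟨fun ⟨p⟩ => ⟨p.map (timesK2Fst G), (Walk.length_map _ p).symm ▸ timesK2_even_length_iff G p⟩,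
    fun ⟨w, hw⟩ => timesK2_reachable_of_walk G w hw⟩

end TimesK2

theorem stmt_6_general {V : Type u} (G : SimpleGraph V) :
    (timesK2 G).Connected ↔ G.Connected ∧ ¬ G.Colorable 2 := by
  constructor
  · intro h
    obtain ⟨u, -⟩ := h.nonempty.some
    refine ⟨h.map (timesK2Fst G) Prod.fst_surjective, fun hG₂ => ?_⟩
    obtain ⟨w, hw⟩ := (timesK2_reachable_iff G).1 (h.preconnected (u, false) (u, true))
    exact absurd (two_colorable_iff_forall_loop_even.1 hG₂ u w) (by simpa using hw)
  · rintro ⟨hG, hG₂⟩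
    have : Nonempty V := hG.nonempty
    exact Connected.mk fun ⟨a, x⟩ ⟨b, y⟩ =>
      (timesK2_reachable_iff G).2 (hG.exists_walk_even_length_iff hG₂ a b _)

/-- `G × K₂` is connected iff `G` is a connected non-bipartite graph. -/
theorem stmt_6 {V : Type u} [Fintype V] [Nonempty V] (G : SimpleGraph V) :
    (timesK2 G).Connected ↔ G.Connected ∧ ¬ G.Colorable 2 :=
  stmt_6_general G
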